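/- Let (p, l) be an independent and infinitesimally rigid affine-normalized realization of an incidence structure S = (P, L, I), meaning the only self-stress is zero and the space of infinitesimal flexes has dimension 8. Then: (a) if i₁, i₂ ∈ P are distinct with p i₁ ≠ p i₂ and m ∈ ℝ² satisfies ⟪p i₁, m⟫ = ⟪p i₂, m⟫ = -1 with m ≠ l j for every j ∈ L, the realization of the extended structure obtained by adjoining a new line j₀ with l j₀ = m and incidences (i₁, j₀), (i₂, j₀) is again independent and infinitesimally rigid (its flex space has dimension 8); and (b) dually, if j₁, j₂ ∈ L are distinct with l j₁ ≠ l j₂ and q ∈ ℝ² satisfies ⟪q, l j₁⟫ = ⟪q, l j₂⟫ = -1 with q ≠ p i for every i ∈ P, the realization obtained by adjoining a new point i₀ with p i₀ = q and incidences (i₀, j₁), (i₀, j₂) is again independent and infinitesimally rigid. -/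

import Mathlib

open Matrix

/-!
A 0-extension adds a new line with exactly two incidences. The two old points `p i₁ ≠ p i₂`
both satisfy `⟪x, m⟫ = -1`, so they are linearly independent in `ℝ²`. Hence equilibrium at the
new line forces a stress to vanish on the two new incidences, after which it is a stress of the
old realization; and the two flex equations at the new line determine its velocity uniquely from
any old flex, so the flex space keeps its dimension. Adjoining a point is the same construction
for the dual incidence structure, with the roles of points and lines exchanged.
-/

/-- The space of infinitesimal flexes of an affine-normalized realization
`(p, l)` of an incidence structure with incidence set `I`: pairs `(p', l')`
with `⟪p i, l' j⟫ + ⟪p' i, l j⟫ = 0` for every incidence `(i, j) ∈ I`. -/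
def flexSpace {P L : Type*} (I : Set (P × L))
    (p : P → Fin 2 → ℝ) (l : L → Fin 2 → ℝ) :
    Submodule ℝ ((P → Fin 2 → ℝ) × (L → Fin 2 → ℝ)) where
  carrier := {x | ∀ ij ∈ I, p ij.1 ⬝ᵥ x.2 ij.2 + x.1 ij.1 ⬝ᵥ l ij.2 = 0}
  add_mem' := by
    intro a b ha hb ij hij
    have h1 := ha ij hij
    have h2 := hb ij hij
    simp only [Prod.fst_add, Prod.snd_add, Pi.add_apply, dotProduct_add,
      add_dotProduct] at *
    linarith
  zero_mem' := by
    intro ij hij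
    simp
  smul_mem' := by
    intro c a ha ij hij
    have h1 := ha ij hij
    simp only [Prod.smul_fst, Prod.smul_snd, Pi.smul_apply, dotProduct_smul,
      smul_dotProduct, smul_eq_mul] at *
    linear_combination c * h1

lemma linearIndependent_pair_of_dotProduct_eq {K n : Type*} [Field K] [Fintype n]
    {u w m : n → K} {c : K} (hc : c ≠ 0) (hu : u ⬝ᵥ m = c) (hw : w ⬝ᵥ m = c) (huw : u ≠ w) :
    LinearIndependent K ![u, w] := by
  refine LinearIndependent.pair_iff.mpr fun s t hst => ?_
  have hsum : (s + t) * c = 0 := by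
    simpa [add_dotProduct, smul_dotProduct, hu, hw, add_mul] using congrArg (· ⬝ᵥ m) hst
  obtain rfl : t = -s := by
    linear_combination (mul_eq_zero.mp hsum).resolve_right hc
  have hs : s • (u - w) = 0 := by
    rw [smul_sub, sub_eq_add_neg, ← neg_smul]
    exact hst
  rcases smul_eq_zero.mp hs with rfl | h
  · simp
  · exact absurd (sub_eq_zero.mp h) huw

lemma existsUnique_dotProduct_pair {K : Type*} [Field K] {u w : Fin 2 → K}
    (h : LinearIndependent K ![u, w]) (a b : K) :
    ∃! v : Fin 2 → K, u ⬝ᵥ v = a ∧ w ⬝ᵥ v = b := by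
  have hM : IsUnit (Matrix.of ![u, w]) := linearIndependent_rows_iff_isUnit.mp h
  have hbij : Function.Bijective (Matrix.of ![u, w]).mulVec :=
    ⟨mulVec_injective_iff_isUnit.mpr hM, mulVec_surjective_iff_isUnit.mpr hM⟩
  have hmulVec : ∀ v, Matrix.of ![u, w] *ᵥ v = ![a, b] ↔ u ⬝ᵥ v = a ∧ w ⬝ᵥ v = b := by
    simp [funext_iff, Fin.forall_fin_two]
  simpa only [hmulVec] using hbij.existsUnique ![a, b]

section IncidenceStructure

variable {P L : Type*}

lemma mem_flexSpace {I : Set (P × L)} {p : P → Fin 2 → ℝ} {l : L → Fin 2 → ℝ}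
    {x : (P → Fin 2 → ℝ) × (L → Fin 2 → ℝ)} :
    x ∈ flexSpace I p l ↔ ∀ ij ∈ I, p ij.1 ⬝ᵥ x.2 ij.2 + x.1 ij.1 ⬝ᵥ l ij.2 = 0 :=
  Iff.rfl

def IsIndependent [Fintype P] [Fintype L] (I : Set (P × L)) (p : P → Fin 2 → ℝ)
    (l : L → Fin 2 → ℝ) : Prop :=
  ∀ ω : P × L → ℝ, (∀ ij ∉ I, ω ij = 0) →
    (∀ j, ∑ i, ω (i, j) • p i = 0) → (∀ i, ∑ j, ω (i, j) • l j = 0) → ω = 0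

/-- The incidences after adjoining a new line `none` through the points `i₁` and `i₂`. -/
def lineExtension (I : Set (P × L)) (i₁ i₂ : P) : Set (P × Option L) :=
  {ij | ∃ q ∈ I, ij = (q.1, some q.2)} ∪ {(i₁, none), (i₂, none)}

/-- The incidences after adjoining a new point `none` on the lines `j₁` and `j₂`. -/
def pointExtension (I : Set (P × L)) (j₁ j₂ : L) : Set (Option P × L) :=
  {ij | ∃ r ∈ I, ij = (some r.1, r.2)} ∪ {(none, j₁), (none, j₂)}

@[simp]
lemma some_mem_lineExtension {I : Set (P × L)} {i₁ i₂ i : P} {j : L} :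
    (i, some j) ∈ lineExtension I i₁ i₂ ↔ (i, j) ∈ I := by
  simp [lineExtension]

@[simp]
lemma none_mem_lineExtension {I : Set (P × L)} {i₁ i₂ i : P} :
    (i, none) ∈ lineExtension I i₁ i₂ ↔ i = i₁ ∨ i = i₂ := by
  simp [lineExtension]

lemma preimage_swap_lineExtension (I : Set (P × L)) (j₁ j₂ : L) :
    Prod.swap ⁻¹' lineExtension (Prod.swap ⁻¹' I) j₁ j₂ = pointExtension I j₁ j₂ := by
  ext ⟨_ | i, j⟩ <;> simp [pointExtension]

lemma map_prodComm_flexSpace (I : Set (P × L)) (p : P → Fin 2 → ℝ) (l : L → Fin 2 → ℝ) :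
    (flexSpace I p l).map (LinearEquiv.prodComm ℝ _ _).toLinearMap =
      flexSpace (Prod.swap ⁻¹' I) l p := by
  ext x
  simp only [Submodule.map_equiv_eq_comap_symm, LinearEquiv.symm_prodComm, Submodule.mem_comap,
    LinearEquiv.coe_coe, LinearEquiv.prodComm_apply, mem_flexSpace, Prod.snd_swap, Prod.fst_swap,
    Prod.forall, Set.mem_preimage, Prod.swap_prod_mk, dotProduct_comm (l _),
    dotProduct_comm (x.1 _), add_comm (p _ ⬝ᵥ _)]
  exact forall_comm

lemma finrank_flexSpace_swap (I : Set (P × L)) (p : P → Fin 2 → ℝ) (l : L → Fin 2 → ℝ) :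
    Module.finrank ℝ (flexSpace (Prod.swap ⁻¹' I) l p) = Module.finrank ℝ (flexSpace I p l) := by
  rw [← map_prodComm_flexSpace, LinearEquiv.finrank_map_eq]

lemma IsIndependent.swap [Fintype P] [Fintype L] {I : Set (P × L)} {p : P → Fin 2 → ℝ}
    {l : L → Fin 2 → ℝ} (h : IsIndependent I p l) : IsIndependent (Prod.swap ⁻¹' I) l p := by
  intro ω hsupp hcol hrow
  have hω := h (ω ∘ Prod.swap) (fun ij hij => hsupp ij.swap hij) hrow hcol
  ext ⟨j, i⟩
  exact congrFun hω (i, j)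

lemma IsIndependent.lineExtension [Fintype P] [Fintype L] {I : Set (P × L)}
    {p : P → Fin 2 → ℝ} {l : L → Fin 2 → ℝ} (h : IsIndependent I p l) {i₁ i₂ : P}
    (hp : LinearIndependent ℝ ![p i₁, p i₂]) (m : Fin 2 → ℝ) :
    IsIndependent (lineExtension I i₁ i₂) p (fun j => j.elim m l) := by
  intro ω hsupp hcol hrow
  have h12 : i₁ ≠ i₂ := by
    rintro rfl
    simpa using LinearIndependent.pair_iff.mp hp 1 (-1) (by simp)
  have hnone : ∀ i, ω (i, none) = 0 := by
    have hsum := hcol none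
    rw [Fintype.sum_eq_add i₁ i₂ h12 fun i hi => by
      rw [hsupp (i, none) (by simpa using hi), zero_smul]] at hsum
    obtain ⟨h₁, h₂⟩ := LinearIndependent.pair_iff.mp hp _ _ hsum
    intro i
    by_cases hi : i = i₁ ∨ i = i₂
    · rcases hi with rfl | rfl <;> assumption
    · exact hsupp (i, none) (by simpa using hi)
  have hsome : (fun ij : P × L => ω (ij.1, some ij.2)) = 0 := by
    refine h _ (fun ij hij => hsupp _ (by simpa using hij)) (fun j => hcol (some j)) fun i => ?_
    simpa [Fintype.sum_option, hnone] using hrow i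
  ext ⟨i, _ | j⟩
  · exact hnone i
  · exact congrFun hsome (i, j)

lemma IsIndependent.pointExtension [Fintype P] [Fintype L] {I : Set (P × L)}
    {p : P → Fin 2 → ℝ} {l : L → Fin 2 → ℝ} (h : IsIndependent I p l) {j₁ j₂ : L}
    (hl : LinearIndependent ℝ ![l j₁, l j₂]) (q : Fin 2 → ℝ) :
    IsIndependent (pointExtension I j₁ j₂) (fun i => i.elim q p) l := by
  simpa only [preimage_swap_lineExtension] using (h.swap.lineExtension hl q).swap

def lineExtensionRestrict (I : Set (P × L)) (p : P → Fin 2 → ℝ) (l : L → Fin 2 → ℝ)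
    (i₁ i₂ : P) (m : Fin 2 → ℝ) :
    flexSpace (lineExtension I i₁ i₂) p (fun j => j.elim m l) →ₗ[ℝ] flexSpace I p l where
  toFun x := ⟨(x.1.1, fun j => x.1.2 (some j)),
    fun ij hij => x.2 (ij.1, some ij.2) (by simpa using hij)⟩
  map_add' _ _ := rfl
  map_smul' _ _ := rfl

lemma lineExtensionRestrict_bijective {I : Set (P × L)} {p : P → Fin 2 → ℝ}
    {l : L → Fin 2 → ℝ} {i₁ i₂ : P} (hp : LinearIndependent ℝ ![p i₁, p i₂])
    (m : Fin 2 → ℝ) : Function.Bijective (lineExtensionRestrict I p l i₁ i₂ m) := by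
  constructor
  · refine (injective_iff_map_eq_zero _).mpr fun x hx => ?_
    have hx₁ : x.1.1 = 0 := congrArg (fun y => y.1.1) hx
    have hx₂ : ∀ j, x.1.2 (some j) = 0 := congrFun (congrArg (fun y => y.1.2) hx)
    have hv : x.1.2 none = 0 := by
      refine (existsUnique_dotProduct_pair hp 0 0).unique ?_ ⟨dotProduct_zero _, dotProduct_zero _⟩
      simpa [hx₁] using And.intro (x.2 (i₁, none) (by simp)) (x.2 (i₂, none) (by simp))
    refine Subtype.ext (Prod.ext hx₁ (funext fun j => ?_))
    cases j with
    | none => exact hv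
    | some j => exact hx₂ j
  · intro y
    obtain ⟨v, ⟨hv₁, hv₂⟩, -⟩ :=
      existsUnique_dotProduct_pair hp (-(y.1.1 i₁ ⬝ᵥ m)) (-(y.1.1 i₂ ⬝ᵥ m))
    refine ⟨⟨(y.1.1, fun j => j.elim v y.1.2), ?_⟩, rfl⟩
    rintro ⟨i, _ | j⟩ hij
    · dsimp only [Option.elim]
      rcases none_mem_lineExtension.mp hij with rfl | rfl
      · linear_combination hv₁
      · linear_combination hv₂
    · exact y.2 (i, j) (some_mem_lineExtension.mp hij)

lemma finrank_flexSpace_lineExtension {I : Set (P × L)} {p : P → Fin 2 → ℝ}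
    {l : L → Fin 2 → ℝ} {i₁ i₂ : P} (hp : LinearIndependent ℝ ![p i₁, p i₂])
    (m : Fin 2 → ℝ) :
    Module.finrank ℝ (flexSpace (lineExtension I i₁ i₂) p (fun j => j.elim m l)) =
      Module.finrank ℝ (flexSpace I p l) :=
  (LinearEquiv.ofBijective _ (lineExtensionRestrict_bijective hp m)).finrank_eq

lemma finrank_flexSpace_pointExtension {I : Set (P × L)} {p : P → Fin 2 → ℝ}
    {l : L → Fin 2 → ℝ} {j₁ j₂ : L} (hl : LinearIndependent ℝ ![l j₁, l j₂])
    (q : Fin 2 → ℝ) :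
    Module.finrank ℝ (flexSpace (pointExtension I j₁ j₂) (fun i => i.elim q p) l) =
      Module.finrank ℝ (flexSpace I p l) := by
  rw [← preimage_swap_lineExtension, finrank_flexSpace_swap,
    finrank_flexSpace_lineExtension hl, finrank_flexSpace_swap]

end IncidenceStructure

theorem zero_extension_independent_infRigid_general
    {P L : Type*} [Fintype P] [Fintype L] (I : Set (P × L))
    (p : P → Fin 2 → ℝ) (l : L → Fin 2 → ℝ)
    (hindep : ∀ ω : P × L → ℝ, (∀ ij ∉ I, ω ij = 0) →
      (∀ j, ∑ i, ω (i, j) • p i = 0) → (∀ i, ∑ j, ω (i, j) • l j = 0) → ω = 0)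
    (hrigid : Module.finrank ℝ (flexSpace I p l) = 8) :
    (∀ (i₁ i₂ : P), i₁ ≠ i₂ → p i₁ ≠ p i₂ →
      ∀ m : Fin 2 → ℝ, p i₁ ⬝ᵥ m = -1 → p i₂ ⬝ᵥ m = -1 → (∀ j, m ≠ l j) →
      (∀ ω : P × Option L → ℝ,
        (∀ ij ∉ ({ij : P × Option L | ∃ q ∈ I, ij = (q.1, some q.2)} ∪
          {(i₁, (none : Option L)), (i₂, (none : Option L))}), ω ij = 0) →
        (∀ j : Option L, ∑ i, ω (i, j) • p i = 0) →
        (∀ i, ∑ j : Option L, ω (i, j) • (j.elim m l) = 0) →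
        ω = 0) ∧
      Module.finrank ℝ (flexSpace
        ({ij : P × Option L | ∃ q ∈ I, ij = (q.1, some q.2)} ∪
          {(i₁, (none : Option L)), (i₂, (none : Option L))})
        p (fun j : Option L => j.elim m l)) = 8) ∧
    (∀ (j₁ j₂ : L), j₁ ≠ j₂ → l j₁ ≠ l j₂ →
      ∀ q : Fin 2 → ℝ, q ⬝ᵥ l j₁ = -1 → q ⬝ᵥ l j₂ = -1 → (∀ i, q ≠ p i) →
      (∀ ω : Option P × L → ℝ,
        (∀ ij ∉ ({ij : Option P × L | ∃ r ∈ I, ij = (some r.1, r.2)} ∪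
          {((none : Option P), j₁), ((none : Option P), j₂)}), ω ij = 0) →
        (∀ j : L, ∑ i : Option P, ω (i, j) • (i.elim q p) = 0) →
        (∀ i : Option P, ∑ j, ω (i, j) • l j = 0) →
        ω = 0) ∧
      Module.finrank ℝ (flexSpace
        ({ij : Option P × L | ∃ r ∈ I, ij = (some r.1, r.2)} ∪
          {((none : Option P), j₁), ((none : Option P), j₂)})
        (fun i : Option P => i.elim q p) l) = 8) := by
  have hI : IsIndependent I p l := hindep
  refine ⟨fun i₁ i₂ _ hp m hm₁ hm₂ _ => ?_, fun j₁ j₂ _ hl q hq₁ hq₂ _ => ?_⟩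
  · have hli := linearIndependent_pair_of_dotProduct_eq (neg_ne_zero.mpr one_ne_zero) hm₁ hm₂ hp
    exact ⟨hI.lineExtension hli m, (finrank_flexSpace_lineExtension hli m).trans hrigid⟩
  · rw [dotProduct_comm] at hq₁ hq₂
    have hli := linearIndependent_pair_of_dotProduct_eq (neg_ne_zero.mpr one_ne_zero) hq₁ hq₂ hl
    exact ⟨hI.pointExtension hli q, (finrank_flexSpace_pointExtension hli q).trans hrigid⟩

/-- 0-extensions preserve independence and infinitesimal rigidity.
(a) adjoining a new line through two distinct points of an independent and
infinitesimally rigid affine-normalized realization (flex space of dimension 8)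
gives again an independent and infinitesimally rigid realization; (b) dually for
adjoining a new point on two distinct lines. -/
theorem zero_extension_independent_infRigid
    {P L : Type*} [Fintype P] [Fintype L] (I : Set (P × L))
    (p : P → Fin 2 → ℝ) (l : L → Fin 2 → ℝ)
    (hreal : ∀ ij ∈ I, p ij.1 ⬝ᵥ l ij.2 = -1)
    (hindep : ∀ ω : P × L → ℝ, (∀ ij ∉ I, ω ij = 0) →
      (∀ j, ∑ i, ω (i, j) • p i = 0) → (∀ i, ∑ j, ω (i, j) • l j = 0) → ω = 0)
    (hrigid : Module.finrank ℝ (flexSpace I p l) = 8) :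
    (∀ (i₁ i₂ : P), i₁ ≠ i₂ → p i₁ ≠ p i₂ →
      ∀ m : Fin 2 → ℝ, p i₁ ⬝ᵥ m = -1 → p i₂ ⬝ᵥ m = -1 → (∀ j, m ≠ l j) →
      (∀ ω : P × Option L → ℝ,
        (∀ ij ∉ ({ij : P × Option L | ∃ q ∈ I, ij = (q.1, some q.2)} ∪
          {(i₁, (none : Option L)), (i₂, (none : Option L))}), ω ij = 0) →
        (∀ j : Option L, ∑ i, ω (i, j) • p i = 0) →
        (∀ i, ∑ j : Option L, ω (i, j) • (j.elim m l) = 0) →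
        ω = 0) ∧
      Module.finrank ℝ (flexSpace
        ({ij : P × Option L | ∃ q ∈ I, ij = (q.1, some q.2)} ∪
          {(i₁, (none : Option L)), (i₂, (none : Option L))})
        p (fun j : Option L => j.elim m l)) = 8) ∧
    (∀ (j₁ j₂ : L), j₁ ≠ j₂ → l j₁ ≠ l j₂ →
      ∀ q : Fin 2 → ℝ, q ⬝ᵥ l j₁ = -1 → q ⬝ᵥ l j₂ = -1 → (∀ i, q ≠ p i) →
      (∀ ω : Option P × L → ℝ,
        (∀ ij ∉ ({ij : Option P × L | ∃ r ∈ I, ij = (some r.1, r.2)} ∪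
          {((none : Option P), j₁), ((none : Option P), j₂)}), ω ij = 0) →
        (∀ j : L, ∑ i : Option P, ω (i, j) • (i.elim q p) = 0) →
        (∀ i : Option P, ∑ j, ω (i, j) • l j = 0) →
        ω = 0) ∧
      Module.finrank ℝ (flexSpace
        ({ij : Option P × L | ∃ r ∈ I, ij = (some r.1, r.2)} ∪
          {((none : Option P), j₁), ((none : Option P), j₂)})
        (fun i : Option P => i.elim q p) l) = 8) :=
  zero_extension_independent_infRigid_general I p l hindep hrigid
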